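/- Let a < b, α ∈ (1/2,1), σ > 0 and f ∈ L²(a,b). Then there exists a unique u ∈ H_0^{α,σ}(a,b) such that ∫_a^b (^C D_{a+}^{α,σ}u)(x)·(^C D_{a+}^{α,σ}v)(x) dx + ∫_a^b u(x)·v(x) dx = ∫_a^b f(x)·v(x) dx for every v ∈ H_0^{α,σ}(a,b); i.e. the linear tempered fractional boundary value problem D_{b−}^{α,σ}(D_{a+}^{α,σ}u) + u = f with u(a) = u(b) = 0 has a unique weak solution. -/

import Mathlib

open MeasureTheory Set Filter
open scoped ENNReal

/-- Left Riemann–Liouville tempered fractional integral `I_{a+}^{α,σ}u`. -/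
noncomputable def tempIL (a α σ : ℝ) (u : ℝ → ℝ) (x : ℝ) : ℝ :=
  (1 / Real.Gamma α) * ∫ s in a..x, (x - s) ^ (α - 1) * Real.exp (-σ * (x - s)) * u s

/-- Right Riemann–Liouville tempered fractional integral `I_{b-}^{α,σ}u`. -/
noncomputable def tempIR (b α σ : ℝ) (u : ℝ → ℝ) (x : ℝ) : ℝ :=
  (1 / Real.Gamma α) * ∫ s in x..b, (s - x) ^ (α - 1) * Real.exp (-σ * (s - x)) * u s

/-- Left Caputo tempered fractional derivative `^C D_{a+}^{α,σ}u`
(for absolutely continuous `u`). -/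
noncomputable def tempCD (a α σ : ℝ) (u : ℝ → ℝ) (x : ℝ) : ℝ :=
  (Real.exp (-σ * x) / Real.Gamma (1 - α)) *
    ∫ s in a..x, (x - s) ^ (-α) * deriv (fun τ => Real.exp (σ * τ) * u τ) s

/-- Right Riemann–Liouville tempered fractional derivative `D_{b-}^{α,σ}v`. -/
noncomputable def tempDR (b α σ : ℝ) (v : ℝ → ℝ) (x : ℝ) : ℝ :=
  -(Real.exp (σ * x) / Real.Gamma (1 - α)) *
    deriv (fun y => ∫ s in y..b, (s - y) ^ (-α) * Real.exp (-σ * s) * v s) x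

/-- Membership in the tempered fractional Sobolev space `H₀^{α,σ}(a,b)`:
`u ∈ L²(a,b)`, `g ∈ L²(a,b)`, `u = I_{a+}^{α,σ} g` a.e. on `(a,b)`, and the
continuous representative vanishes at `b`.  One writes `^C D_{a+}^{α,σ}u := g`. -/
def MemH0 (a b α σ : ℝ) (u g : ℝ → ℝ) : Prop :=
  MeasureTheory.MemLp u 2 (MeasureTheory.volume.restrict (Set.Ioo a b)) ∧
  MeasureTheory.MemLp g 2 (MeasureTheory.volume.restrict (Set.Ioo a b)) ∧
  (∀ᵐ x ∂(MeasureTheory.volume.restrict (Set.Ioo a b)), u x = tempIL a α σ g x) ∧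
  tempIL a α σ g b = 0

/-- The norm of `H₀^{α,σ}(a,b)`: `‖u‖ = (‖u‖²_{L²} + ‖g‖²_{L²})^{1/2}` where `g = ^C D u`. -/
noncomputable def H0norm (a b : ℝ) (u g : ℝ → ℝ) : ℝ :=
  Real.sqrt ((∫ x in Set.Ioo a b, u x ^ 2) + (∫ x in Set.Ioo a b, g x ^ 2))

/-- The Lagrangian functional `J(u) = ∫_a^b L(u(t), ^C D_{a+}^{α,σ}u(t), t) dt`,
expressed in terms of the pair `(u, g)` with `g = ^C D_{a+}^{α,σ}u`. -/
noncomputable def Jfun (a b : ℝ) (L : ℝ → ℝ → ℝ → ℝ) (u g : ℝ → ℝ) : ℝ :=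
  ∫ t in Set.Ioo a b, L (u t) (g t) t

/-- Partial derivative `∂L/∂x` of the Lagrangian w.r.t. its first variable. -/
noncomputable def Lx (L : ℝ → ℝ → ℝ → ℝ) (x y t : ℝ) : ℝ := deriv (fun z => L z y t) x

/-- Partial derivative `∂L/∂y` of the Lagrangian w.r.t. its second variable. -/
noncomputable def Ly (L : ℝ → ℝ → ℝ → ℝ) (x y t : ℝ) : ℝ := deriv (fun z => L x z t) y

/-- Lower incomplete gamma function `γ(α,x) = ∫₀ˣ t^{α-1} e^{-t} dt`. -/
noncomputable def lincGamma (α x : ℝ) : ℝ := ∫ t in (0:ℝ)..x, t ^ (α - 1) * Real.exp (-t)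


section Aux

variable {a b α σ : ℝ}

private lemma integrable_mul_of_memL2 {μ : Measure ℝ} {f g : ℝ → ℝ}
    (hf : MemLp f 2 μ) (hg : MemLp g 2 μ) :
    Integrable (fun x => f x * g x) μ := by
  refine Integrable.mono' ((hf.integrable_sq.add hg.integrable_sq).div_const 2)
    (hf.1.mul hg.1) (Filter.Eventually.of_forall fun x => ?_)
  rw [Real.norm_eq_abs, abs_mul]
  show |f x| * |g x| ≤ (f x ^ 2 + g x ^ 2) / 2
  nlinarith [sq_nonneg (|f x| - |g x|), sq_abs (f x), sq_abs (g x), abs_nonneg (f x),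
    abs_nonneg (g x)]

private lemma cs_bound {μ : Measure ℝ} {f g : ℝ → ℝ}
    (hf : MemLp f 2 μ) (hg : MemLp g 2 μ) :
    |∫ x, f x * g x ∂μ| ≤ Real.sqrt (∫ x, f x ^ 2 ∂μ) * Real.sqrt (∫ x, g x ^ 2 ∂μ) := by
  have hf' : MemLp (fun x => |f x|) (ENNReal.ofReal 2) μ := by
    rw [ENNReal.ofReal_ofNat]; simpa [Real.norm_eq_abs] using hf.norm
  have hg' : MemLp (fun x => |g x|) (ENNReal.ofReal 2) μ := by
    rw [ENNReal.ofReal_ofNat]; simpa [Real.norm_eq_abs] using hg.norm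
  have hpq : Real.HolderConjugate 2 2 := Real.HolderConjugate.two_two
  have h := integral_mul_le_Lp_mul_Lq_of_nonneg hpq
    (Filter.Eventually.of_forall fun x => abs_nonneg (f x))
    (Filter.Eventually.of_forall fun x => abs_nonneg (g x)) hf' hg'
  have e1 : ∀ h : ℝ → ℝ, (∫ x, |h x| ^ (2:ℝ) ∂μ) = ∫ x, h x ^ 2 ∂μ := fun h =>
    integral_congr_ae (Filter.Eventually.of_forall fun x => by
      show |h x| ^ (2:ℝ) = h x ^ 2
      rw [show (2:ℝ) = ((2:ℕ):ℝ) by norm_num, Real.rpow_natCast, sq_abs])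
  calc |∫ x, f x * g x ∂μ| ≤ ∫ x, |f x| * |g x| ∂μ := by
        simpa [Real.norm_eq_abs, abs_mul] using
          norm_integral_le_integral_norm (μ := μ) (fun x => f x * g x)
    _ ≤ _ := by
        rw [Real.sqrt_eq_rpow, Real.sqrt_eq_rpow]
        simpa [e1] using h
private lemma measKer (α σ x : ℝ) :
    Measurable fun s : ℝ => (x - s) ^ (α - 1) * Real.exp (-σ * (x - s)) :=
  ((measurable_const.sub measurable_id).pow measurable_const).mul
    ((measurable_const.mul (measurable_const.sub measurable_id)).exp)

private lemma ker_facts (hα : α ∈ Set.Ioo (1/2:ℝ) 1) (hσ : 0 < σ) (hab : a < b)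
    {x : ℝ} (hx : x ∈ Set.Ioc a b) :
    MemLp (fun s => (x - s) ^ (α - 1) * Real.exp (-σ * (x - s))) 2
        (volume.restrict (Set.Ioo a x)) ∧
      (∫ s in Set.Ioo a x, ((x - s) ^ (α - 1) * Real.exp (-σ * (x - s))) ^ 2) ≤
        (b - a) ^ (2*α - 1) / (2*α - 1) := by
  have hax : a < x := hx.1
  have hr : (-1:ℝ) < 2*α - 2 := by nlinarith [hα.1]
  have hmaj : IntegrableOn (fun s => (x - s) ^ (2*α - 2)) (Set.Ioo a x) volume := by
    have h1 : IntervalIntegrable (fun u : ℝ => u ^ (2*α - 2)) volume 0 (x - a) :=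
      intervalIntegral.intervalIntegrable_rpow' hr
    have h2 := (h1.comp_sub_left x).symm
    simp only [sub_zero, sub_sub_cancel] at h2
    exact (intervalIntegrable_iff_integrableOn_Ioo_of_le hax.le).mp h2
  have hpt : ∀ s ∈ Set.Ioo a x,
      ((x - s) ^ (α - 1) * Real.exp (-σ * (x - s))) ^ 2 ≤ (x - s) ^ (2*α - 2) := by
    intro s hs
    have h0 : 0 < x - s := by linarith [hs.2]
    have e1 : ((x - s) ^ (α - 1)) ^ 2 = (x - s) ^ (2*α - 2) := by
      rw [← Real.rpow_natCast ((x - s) ^ (α - 1)) 2, ← Real.rpow_mul h0.le]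
      congr 1; push_cast; ring
    have hexp : Real.exp (-σ * (x - s)) ≤ 1 := by
      rw [Real.exp_le_one_iff]; nlinarith
    have hexp2 : (Real.exp (-σ * (x - s))) ^ 2 ≤ 1 := by
      nlinarith [Real.exp_nonneg (-σ * (x - s))]
    calc ((x - s) ^ (α - 1) * Real.exp (-σ * (x - s))) ^ 2
        = ((x - s) ^ (α - 1)) ^ 2 * (Real.exp (-σ * (x - s))) ^ 2 := by ring
      _ ≤ (x - s) ^ (2*α - 2) * 1 := by
          rw [e1]
          exact mul_le_mul_of_nonneg_left hexp2 (Real.rpow_nonneg h0.le _)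
      _ = (x - s) ^ (2*α - 2) := mul_one _
  have hintsq : Integrable (fun s => ((x - s) ^ (α - 1) * Real.exp (-σ * (x - s))) ^ 2)
      (volume.restrict (Set.Ioo a x)) := by
    refine Integrable.mono' hmaj ((measKer α σ x).pow_const 2).aestronglyMeasurable ?_
    filter_upwards [ae_restrict_mem measurableSet_Ioo] with s hs
    rw [Real.norm_eq_abs, abs_of_nonneg (sq_nonneg _)]
    exact hpt s hs
  refine ⟨(memLp_two_iff_integrable_sq (measKer α σ x).aestronglyMeasurable).mpr hintsq, ?_⟩
  have hb1 : (∫ s in Set.Ioo a x, ((x - s) ^ (α - 1) * Real.exp (-σ * (x - s))) ^ 2) ≤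
      ∫ s in Set.Ioo a x, (x - s) ^ (2*α - 2) :=
    setIntegral_mono_on hintsq hmaj measurableSet_Ioo hpt
  have hb2 : (∫ s in Set.Ioo a x, (x - s) ^ (2*α - 2)) = (x - a) ^ (2*α - 1) / (2*α - 1) := by
    rw [← integral_Ioc_eq_integral_Ioo, ← intervalIntegral.integral_of_le hax.le,
      intervalIntegral.integral_comp_sub_left (fun u => u ^ (2*α - 2)) x, sub_self,
      integral_rpow (Or.inl hr),
      Real.zero_rpow (by nlinarith [hα.1] : 2*α - 2 + 1 ≠ 0)]
    rw [show 2*α - 2 + 1 = 2*α - 1 by ring, sub_zero]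
  have hb3 : (x - a) ^ (2*α - 1) / (2*α - 1) ≤ (b - a) ^ (2*α - 1) / (2*α - 1) := by
    have h1 := Real.rpow_le_rpow (by linarith : (0:ℝ) ≤ x - a)
      (by linarith [hx.2] : x - a ≤ b - a) (by nlinarith [hα.1] : (0:ℝ) ≤ 2*α - 1)
    exact (div_le_div_iff_of_pos_right (by nlinarith [hα.1] : (0:ℝ) < 2*α - 1)).mpr h1
  rw [hb2] at hb1
  exact hb1.trans hb3
private lemma tempIL_eq_setIntegral {x : ℝ} (hax : a ≤ x) (g : ℝ → ℝ) :
    tempIL a α σ g x =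
      (1 / Real.Gamma α) *
        ∫ s in Set.Ioo a x, (x - s) ^ (α - 1) * Real.exp (-σ * (x - s)) * g s := by
  rw [tempIL, intervalIntegral.integral_of_le hax, integral_Ioc_eq_integral_Ioo]

private lemma tempIL_congr {x : ℝ} (hx : x ∈ Set.Ioc a b) {g g' : ℝ → ℝ}
    (h : g =ᵐ[volume.restrict (Set.Ioo a b)] g') : tempIL a α σ g x = tempIL a α σ g' x := by
  rw [tempIL_eq_setIntegral hx.1.le, tempIL_eq_setIntegral hx.1.le]
  congr 1
  refine integral_congr_ae ?_
  have h' : g =ᵐ[volume.restrict (Set.Ioo a x)] g' :=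
    ae_restrict_of_ae_restrict_of_subset (Set.Ioo_subset_Ioo_right hx.2) h
  filter_upwards [h'] with s hs
  rw [hs]

private lemma integrableOn_ker_mul (hα : α ∈ Set.Ioo (1/2:ℝ) 1) (hσ : 0 < σ) (hab : a < b)
    {g : ℝ → ℝ} (hg : MemLp g 2 (volume.restrict (Set.Ioo a b))) {x : ℝ}
    (hx : x ∈ Set.Ioc a b) :
    IntegrableOn (fun s => (x - s) ^ (α - 1) * Real.exp (-σ * (x - s)) * g s)
      (Set.Ioo a x) volume := by
  have hk := (ker_facts hα hσ hab hx).1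
  have hg' : MemLp g 2 (volume.restrict (Set.Ioo a x)) :=
    hg.mono_measure (Measure.restrict_mono (Set.Ioo_subset_Ioo_right hx.2) le_rfl)
  exact integrable_mul_of_memL2 hk hg'

private lemma tempIL_add {x : ℝ} (hax : a ≤ x) {g g' : ℝ → ℝ}
    (hi : IntegrableOn (fun s => (x - s) ^ (α - 1) * Real.exp (-σ * (x - s)) * g s)
      (Set.Ioo a x) volume)
    (hi' : IntegrableOn (fun s => (x - s) ^ (α - 1) * Real.exp (-σ * (x - s)) * g' s)
      (Set.Ioo a x) volume) :
    tempIL a α σ (fun s => g s + g' s) x = tempIL a α σ g x + tempIL a α σ g' x := by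
  rw [tempIL_eq_setIntegral hax, tempIL_eq_setIntegral hax, tempIL_eq_setIntegral hax,
    ← mul_add, ← integral_add hi hi']
  congr 1
  refine integral_congr_ae (Filter.Eventually.of_forall fun s => ?_)
  ring

private lemma tempIL_sub {x : ℝ} (hax : a ≤ x) {g g' : ℝ → ℝ}
    (hi : IntegrableOn (fun s => (x - s) ^ (α - 1) * Real.exp (-σ * (x - s)) * g s)
      (Set.Ioo a x) volume)
    (hi' : IntegrableOn (fun s => (x - s) ^ (α - 1) * Real.exp (-σ * (x - s)) * g' s)
      (Set.Ioo a x) volume) :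
    tempIL a α σ (fun s => g s - g' s) x = tempIL a α σ g x - tempIL a α σ g' x := by
  rw [tempIL_eq_setIntegral hax, tempIL_eq_setIntegral hax, tempIL_eq_setIntegral hax,
    ← mul_sub, ← integral_sub hi hi']
  congr 1
  refine integral_congr_ae (Filter.Eventually.of_forall fun s => ?_)
  ring

private lemma tempIL_smul (c : ℝ) (g : ℝ → ℝ) (x : ℝ) :
    tempIL a α σ (fun s => c * g s) x = c * tempIL a α σ g x := by
  rw [tempIL, tempIL]
  have : (∫ s in a..x, (x - s) ^ (α - 1) * Real.exp (-σ * (x - s)) * (c * g s)) =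
      c * ∫ s in a..x, (x - s) ^ (α - 1) * Real.exp (-σ * (x - s)) * g s := by
    rw [← intervalIntegral.integral_const_mul]
    refine intervalIntegral.integral_congr fun s _ => ?_
    ring
  rw [this]
  ring

private lemma tempIL_bound (hα : α ∈ Set.Ioo (1/2:ℝ) 1) (hσ : 0 < σ) (hab : a < b)
    {g : ℝ → ℝ} (hg : MemLp g 2 (volume.restrict (Set.Ioo a b))) {x : ℝ}
    (hx : x ∈ Set.Ioc a b) :
    |tempIL a α σ g x| ≤ 1 / Real.Gamma α * Real.sqrt ((b - a) ^ (2*α - 1) / (2*α - 1)) *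
      Real.sqrt (∫ s in Set.Ioo a b, g s ^ 2) := by
  obtain ⟨hk, hkb⟩ := ker_facts hα hσ hab hx
  have hg' : MemLp g 2 (volume.restrict (Set.Ioo a x)) :=
    hg.mono_measure (Measure.restrict_mono (Set.Ioo_subset_Ioo_right hx.2) le_rfl)
  have hΓ : 0 < Real.Gamma α := Real.Gamma_pos_of_pos (by linarith [hα.1])
  rw [tempIL_eq_setIntegral hx.1.le, abs_mul,
    abs_of_pos (by positivity : (0:ℝ) < 1 / Real.Gamma α)]
  have hcs := cs_bound hk hg'
  have h2 : (∫ s in Set.Ioo a x, g s ^ 2) ≤ ∫ s in Set.Ioo a b, g s ^ 2 :=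
    setIntegral_mono_set hg.integrable_sq
      (Filter.Eventually.of_forall fun s => sq_nonneg _)
      ((Set.Ioo_subset_Ioo_right hx.2).eventuallyLE)
  calc 1 / Real.Gamma α *
        |∫ s in Set.Ioo a x, (x - s) ^ (α - 1) * Real.exp (-σ * (x - s)) * g s|
      ≤ 1 / Real.Gamma α *
        (Real.sqrt (∫ s in Set.Ioo a x, ((x - s) ^ (α - 1) * Real.exp (-σ * (x - s))) ^ 2) *
          Real.sqrt (∫ s in Set.Ioo a x, g s ^ 2)) := by
        exact mul_le_mul_of_nonneg_left hcs (by positivity)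
    _ ≤ 1 / Real.Gamma α * (Real.sqrt ((b - a) ^ (2*α - 1) / (2*α - 1)) *
          Real.sqrt (∫ s in Set.Ioo a b, g s ^ 2)) := by
        refine mul_le_mul_of_nonneg_left ?_ (by positivity)
        exact mul_le_mul (Real.sqrt_le_sqrt hkb) (Real.sqrt_le_sqrt h2)
          (Real.sqrt_nonneg _) (Real.sqrt_nonneg _)
    _ = _ := by ring
private lemma aesm_tempIL (hab : a < b) {g : ℝ → ℝ} (hg : StronglyMeasurable g) :
    AEStronglyMeasurable (fun x => tempIL a α σ g x) (volume.restrict (Set.Ioo a b)) := by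
  set G : ℝ × ℝ → ℝ := fun q => Set.indicator {q : ℝ × ℝ | a < q.2 ∧ q.2 ≤ q.1}
    (fun q => (q.1 - q.2) ^ (α - 1) * Real.exp (-σ * (q.1 - q.2)) * g q.2) q with hG
  have hGm : Measurable G := by
    refine Measurable.indicator ?_ ?_
    · exact (((measurable_fst.sub measurable_snd).pow measurable_const).mul
        ((measurable_const.mul (measurable_fst.sub measurable_snd)).exp)).mul
        (hg.measurable.comp measurable_snd)
    · exact (measurableSet_lt measurable_const measurable_snd).inter
        (measurableSet_le measurable_snd measurable_fst)
  have hsm : StronglyMeasurable fun x : ℝ => ∫ s : ℝ, G (x, s) :=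
    hGm.stronglyMeasurable.integral_prod_right'
  refine AEStronglyMeasurable.congr
    ((hsm.const_mul (1 / Real.Gamma α)).aestronglyMeasurable) ?_
  filter_upwards [ae_restrict_mem measurableSet_Ioo] with x hx
  rw [tempIL, intervalIntegral.integral_of_le hx.1.le]
  congr 1
  rw [← integral_indicator measurableSet_Ioc]
  congr 1

private lemma memL2_tempIL (hα : α ∈ Set.Ioo (1/2:ℝ) 1) (hσ : 0 < σ) (hab : a < b)
    {g : ℝ → ℝ} (hg : MemLp g 2 (volume.restrict (Set.Ioo a b)))
    (hgm : StronglyMeasurable g) :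
    MemLp (fun x => tempIL a α σ g x) 2 (volume.restrict (Set.Ioo a b)) := by
  haveI : IsFiniteMeasure (volume.restrict (Set.Ioo a b)) := by
    constructor
    rw [Measure.restrict_apply_univ, Real.volume_Ioo]
    exact ENNReal.ofReal_lt_top
  refine MemLp.of_bound (aesm_tempIL hab hgm)
    (1 / Real.Gamma α * Real.sqrt ((b - a) ^ (2*α - 1) / (2*α - 1)) *
      Real.sqrt (∫ s in Set.Ioo a b, g s ^ 2)) ?_
  filter_upwards [ae_restrict_mem measurableSet_Ioo] with x hx
  rw [Real.norm_eq_abs]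
  exact tempIL_bound hα hσ hab hg ⟨hx.1, hx.2.le⟩

private lemma inner_eq {μ : Measure ℝ} (f g : Lp ℝ 2 μ) :
    (inner ℝ f g : ℝ) = ∫ x, f x * g x ∂μ := by
  rw [MeasureTheory.L2.inner_def]
  refine integral_congr_ae (Filter.Eventually.of_forall fun x => ?_)
  simp [RCLike.inner_apply, conj_trivial, mul_comm]

private lemma integral_sq_eq {μ : Measure ℝ} (g : Lp ℝ 2 μ) :
    (∫ x, (g : ℝ → ℝ) x ^ 2 ∂μ) = ‖g‖ ^ 2 := by
  have h := inner_eq g g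
  rw [real_inner_self_eq_norm_sq] at h
  rw [h]
  exact integral_congr_ae (Filter.Eventually.of_forall fun x => pow_two _)
open RealInnerProductSpace in
private noncomputable def Tlin (a b α σ : ℝ) (hab : a < b) (hα : α ∈ Set.Ioo (1/2:ℝ) 1)
    (hσ : 0 < σ) :
    Lp ℝ 2 (volume.restrict (Set.Ioo a b)) →ₗ[ℝ] Lp ℝ 2 (volume.restrict (Set.Ioo a b)) where
  toFun gL := (memL2_tempIL hα hσ hab (Lp.memLp gL) (Lp.stronglyMeasurable gL)).toLp
    (fun x => tempIL a α σ (⇑gL) x)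
  map_add' gL hL := by
    have h1 : (⇑(gL + hL) : ℝ → ℝ) =ᵐ[volume.restrict (Set.Ioo a b)]
        fun s => gL s + hL s := Lp.coeFn_add gL hL
    rw [← MemLp.toLp_add]
    refine MemLp.toLp_congr _ _ ?_
    filter_upwards [ae_restrict_mem measurableSet_Ioo] with x hx
    have hx' : x ∈ Set.Ioc a b := ⟨hx.1, hx.2.le⟩
    rw [tempIL_congr hx' h1]
    show tempIL a α σ (fun s => (⇑gL) s + (⇑hL) s) x = _
    rw [tempIL_add hx'.1.le
      (integrableOn_ker_mul hα hσ hab (Lp.memLp gL) hx')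
      (integrableOn_ker_mul hα hσ hab (Lp.memLp hL) hx')]
    rfl
  map_smul' c gL := by
    have h1 : (⇑(c • gL) : ℝ → ℝ) =ᵐ[volume.restrict (Set.Ioo a b)]
        fun s => c * gL s := by
      filter_upwards [Lp.coeFn_smul c gL] with s hs
      rw [hs]; rfl
    simp only [RingHom.id_apply]
    rw [← MemLp.toLp_const_smul]
    refine MemLp.toLp_congr _ _ ?_
    filter_upwards [ae_restrict_mem measurableSet_Ioo] with x hx
    rw [tempIL_congr ⟨hx.1, hx.2.le⟩ h1, tempIL_smul]
    rfl

private lemma Tlin_bound (a b α σ : ℝ) (hab : a < b) (hα : α ∈ Set.Ioo (1/2:ℝ) 1)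
    (hσ : 0 < σ) (gL : Lp ℝ 2 (volume.restrict (Set.Ioo a b))) :
    ‖Tlin a b α σ hab hα hσ gL‖ ≤
      (1 / Real.Gamma α * Real.sqrt ((b - a) ^ (2*α - 1) / (2*α - 1)) * Real.sqrt (b - a)) *
        ‖gL‖ := by
  have hΓ : 0 < Real.Gamma α := Real.Gamma_pos_of_pos (by linarith [hα.1])
  have hC0 : 0 ≤ 1 / Real.Gamma α * Real.sqrt ((b - a) ^ (2*α - 1) / (2*α - 1)) * ‖gL‖ := by
    have := Real.sqrt_nonneg ((b - a) ^ (2*α - 1) / (2*α - 1))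
    have := norm_nonneg gL
    positivity
  have hbd : ∀ᵐ x ∂(volume.restrict (Set.Ioo a b)), ‖tempIL a α σ (⇑gL) x‖ ≤
      1 / Real.Gamma α * Real.sqrt ((b - a) ^ (2*α - 1) / (2*α - 1)) * ‖gL‖ := by
    filter_upwards [ae_restrict_mem measurableSet_Ioo] with x hx
    rw [Real.norm_eq_abs]
    refine (tempIL_bound hα hσ hab (Lp.memLp gL) ⟨hx.1, hx.2.le⟩).trans ?_
    rw [show (∫ s in Set.Ioo a b, (⇑gL) s ^ 2) = ‖gL‖ ^ 2 from integral_sq_eq gL,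
      Real.sqrt_sq (norm_nonneg _)]
  have hle := eLpNorm_le_of_ae_bound (p := 2) hbd
  have hμu : (volume.restrict (Set.Ioo a b)) Set.univ = ENNReal.ofReal (b - a) := by
    rw [Measure.restrict_apply_univ, Real.volume_Ioo]
  show ‖(memL2_tempIL hα hσ hab (Lp.memLp gL) (Lp.stronglyMeasurable gL)).toLp
    (fun x => tempIL a α σ (⇑gL) x)‖ ≤ _
  rw [Lp.norm_toLp]
  calc (eLpNorm (fun x => tempIL a α σ (⇑gL) x) 2 (volume.restrict (Set.Ioo a b))).toReal
      ≤ ((ENNReal.ofReal (b - a)) ^ (((2:ℝ≥0∞).toReal)⁻¹) *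
          ENNReal.ofReal (1 / Real.Gamma α * Real.sqrt ((b - a) ^ (2*α - 1) / (2*α - 1)) *
            ‖gL‖)).toReal := by
        refine ENNReal.toReal_mono (ENNReal.mul_ne_top
          (ENNReal.rpow_ne_top_of_nonneg (by norm_num) ENNReal.ofReal_ne_top)
          ENNReal.ofReal_ne_top) ?_
        rw [← hμu]
        exact hle
    _ = Real.sqrt (b - a) *
          (1 / Real.Gamma α * Real.sqrt ((b - a) ^ (2*α - 1) / (2*α - 1)) * ‖gL‖) := by
        rw [ENNReal.toReal_mul, ENNReal.toReal_ofReal hC0]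
        congr 1
        rw [← ENNReal.toReal_rpow, ENNReal.toReal_ofReal (by linarith : (0:ℝ) ≤ b - a)]
        rw [Real.sqrt_eq_rpow]
        norm_num
    _ = _ := by ring

private noncomputable def TIop (a b α σ : ℝ) (hab : a < b) (hα : α ∈ Set.Ioo (1/2:ℝ) 1)
    (hσ : 0 < σ) :
    Lp ℝ 2 (volume.restrict (Set.Ioo a b)) →L[ℝ] Lp ℝ 2 (volume.restrict (Set.Ioo a b)) :=
  (Tlin a b α σ hab hα hσ).mkContinuous _ (Tlin_bound a b α σ hab hα hσ)

private lemma TIop_coe (a b α σ : ℝ) (hab : a < b) (hα : α ∈ Set.Ioo (1/2:ℝ) 1)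
    (hσ : 0 < σ) (gL : Lp ℝ 2 (volume.restrict (Set.Ioo a b))) :
    ⇑(TIop a b α σ hab hα hσ gL) =ᵐ[volume.restrict (Set.Ioo a b)]
      fun x => tempIL a α σ (⇑gL) x :=
  (memL2_tempIL hα hσ hab (Lp.memLp gL) (Lp.stronglyMeasurable gL)).coeFn_toLp

private noncomputable def PhiF (a b α σ : ℝ) (hab : a < b) (hα : α ∈ Set.Ioo (1/2:ℝ) 1)
    (hσ : 0 < σ) : Lp ℝ 2 (volume.restrict (Set.Ioo a b)) →L[ℝ] ℝ :=
  innerSL ℝ ((ker_facts hα hσ hab (show b ∈ Set.Ioc a b from ⟨hab, le_refl b⟩)).1.toLp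
    (fun s => (b - s) ^ (α - 1) * Real.exp (-σ * (b - s))))

private lemma PhiF_eq (a b α σ : ℝ) (hab : a < b) (hα : α ∈ Set.Ioo (1/2:ℝ) 1)
    (hσ : 0 < σ) (gL : Lp ℝ 2 (volume.restrict (Set.Ioo a b))) :
    PhiF a b α σ hab hα hσ gL = Real.Gamma α * tempIL a α σ (⇑gL) b := by
  have hΓ : 0 < Real.Gamma α := Real.Gamma_pos_of_pos (by linarith [hα.1])
  have hkb := (ker_facts hα hσ hab (show b ∈ Set.Ioc a b from ⟨hab, le_refl b⟩)).1
  have h1 : PhiF a b α σ hab hα hσ gL =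
      ∫ x, (hkb.toLp (fun s => (b - s) ^ (α - 1) * Real.exp (-σ * (b - s)))) x * gL x
        ∂(volume.restrict (Set.Ioo a b)) := inner_eq _ gL
  have h2 : (∫ x, (hkb.toLp (fun s => (b - s) ^ (α - 1) * Real.exp (-σ * (b - s)))) x * gL x
        ∂(volume.restrict (Set.Ioo a b))) =
      ∫ s in Set.Ioo a b, (b - s) ^ (α - 1) * Real.exp (-σ * (b - s)) * gL s :=
    integral_congr_ae (by filter_upwards [hkb.coeFn_toLp] with s hs; rw [hs])
  rw [h1, h2, tempIL_eq_setIntegral (le_of_lt hab), ← mul_assoc, mul_one_div,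
    div_self hΓ.ne', one_mul]

set_option maxHeartbeats 1000000 in
open RealInnerProductSpace in
private noncomputable def Bform (a b α σ : ℝ) (hab : a < b) (hα : α ∈ Set.Ioo (1/2:ℝ) 1)
    (hσ : 0 < σ) :
    ↥((PhiF a b α σ hab hα hσ).ker) →L[ℝ]
      ↥((PhiF a b α σ hab hα hσ).ker) →L[ℝ] ℝ :=
  LinearMap.mkContinuous₂
    (LinearMap.mk₂ ℝ
      (fun g h => ⟪(g : Lp ℝ 2 (volume.restrict (Set.Ioo a b))),
          (h : Lp ℝ 2 (volume.restrict (Set.Ioo a b)))⟫ +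
        ⟪TIop a b α σ hab hα hσ (g : Lp ℝ 2 (volume.restrict (Set.Ioo a b))),
          TIop a b α σ hab hα hσ (h : Lp ℝ 2 (volume.restrict (Set.Ioo a b)))⟫)
      (fun g g' h => by
        beta_reduce
        rw [show ((g + g' : (PhiF a b α σ hab hα hσ).ker) :
            Lp ℝ 2 (volume.restrict (Set.Ioo a b))) =
          (g : Lp ℝ 2 (volume.restrict (Set.Ioo a b))) +
            (g' : Lp ℝ 2 (volume.restrict (Set.Ioo a b))) from rfl]
        rw [map_add (TIop a b α σ hab hα hσ), inner_add_left, inner_add_left]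
        ring)
      (fun c g h => by
        beta_reduce
        rw [show ((c • g : (PhiF a b α σ hab hα hσ).ker) :
            Lp ℝ 2 (volume.restrict (Set.Ioo a b))) =
          c • (g : Lp ℝ 2 (volume.restrict (Set.Ioo a b))) from rfl]
        rw [ContinuousLinearMap.map_smul, real_inner_smul_left, real_inner_smul_left,
          smul_eq_mul]
        ring)
      (fun g h h' => by
        beta_reduce
        rw [show ((h + h' : (PhiF a b α σ hab hα hσ).ker) :
            Lp ℝ 2 (volume.restrict (Set.Ioo a b))) =
          (h : Lp ℝ 2 (volume.restrict (Set.Ioo a b))) +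
            (h' : Lp ℝ 2 (volume.restrict (Set.Ioo a b))) from rfl]
        rw [map_add (TIop a b α σ hab hα hσ), inner_add_right, inner_add_right]
        ring)
      (fun c h g => by
        beta_reduce
        rw [show ((c • g : (PhiF a b α σ hab hα hσ).ker) :
            Lp ℝ 2 (volume.restrict (Set.Ioo a b))) =
          c • (g : Lp ℝ 2 (volume.restrict (Set.Ioo a b))) from rfl]
        rw [ContinuousLinearMap.map_smul, real_inner_smul_right, real_inner_smul_right,
          smul_eq_mul]
        ring))
    (1 + ‖TIop a b α σ hab hα hσ‖ * ‖TIop a b α σ hab hα hσ‖)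
    (fun g h => by
      simp only [LinearMap.mk₂_apply, Real.norm_eq_abs]
      have h1 := abs_real_inner_le_norm (g : Lp ℝ 2 (volume.restrict (Set.Ioo a b)))
        (h : Lp ℝ 2 (volume.restrict (Set.Ioo a b)))
      have h2 := abs_real_inner_le_norm
        (TIop a b α σ hab hα hσ (g : Lp ℝ 2 (volume.restrict (Set.Ioo a b))))
        (TIop a b α σ hab hα hσ (h : Lp ℝ 2 (volume.restrict (Set.Ioo a b))))
      have h3 := (TIop a b α σ hab hα hσ).le_opNorm
        (g : Lp ℝ 2 (volume.restrict (Set.Ioo a b)))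
      have h4 := (TIop a b α σ hab hα hσ).le_opNorm
        (h : Lp ℝ 2 (volume.restrict (Set.Ioo a b)))
      calc |⟪(g : Lp ℝ 2 (volume.restrict (Set.Ioo a b))),
            (h : Lp ℝ 2 (volume.restrict (Set.Ioo a b)))⟫ +
          ⟪TIop a b α σ hab hα hσ (g : Lp ℝ 2 (volume.restrict (Set.Ioo a b))),
            TIop a b α σ hab hα hσ (h : Lp ℝ 2 (volume.restrict (Set.Ioo a b)))⟫|
          ≤ |⟪(g : Lp ℝ 2 (volume.restrict (Set.Ioo a b))),
              (h : Lp ℝ 2 (volume.restrict (Set.Ioo a b)))⟫| +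
            |⟪TIop a b α σ hab hα hσ (g : Lp ℝ 2 (volume.restrict (Set.Ioo a b))),
              TIop a b α σ hab hα hσ (h : Lp ℝ 2 (volume.restrict (Set.Ioo a b)))⟫| :=
            abs_add_le _ _
        _ ≤ ‖(g : Lp ℝ 2 (volume.restrict (Set.Ioo a b)))‖ *
              ‖(h : Lp ℝ 2 (volume.restrict (Set.Ioo a b)))‖ +
            (‖TIop a b α σ hab hα hσ‖ * ‖(g : Lp ℝ 2 (volume.restrict (Set.Ioo a b)))‖) *
              (‖TIop a b α σ hab hα hσ‖ * ‖(h : Lp ℝ 2 (volume.restrict (Set.Ioo a b)))‖) := by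
            refine add_le_add h1 (h2.trans ?_)
            refine mul_le_mul h3 h4 (norm_nonneg _) ?_
            positivity
        _ = (1 + ‖TIop a b α σ hab hα hσ‖ * ‖TIop a b α σ hab hα hσ‖) * ‖g‖ * ‖h‖ := by
            rw [show ‖(g : Lp ℝ 2 (volume.restrict (Set.Ioo a b)))‖ = ‖g‖ from rfl,
              show ‖(h : Lp ℝ 2 (volume.restrict (Set.Ioo a b)))‖ = ‖h‖ from rfl]
            ring)

end Aux

set_option maxHeartbeats 1000000 in
open RealInnerProductSpace in
private theorem exists_sol (a b α σ : ℝ) (hab : a < b) (hα : α ∈ Set.Ioo (1/2:ℝ) 1)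
    (hσ : 0 < σ) (f : ℝ → ℝ)
    (hf : MemLp f 2 (volume.restrict (Set.Ioo a b))) :
    ∃ u g : ℝ → ℝ, MemH0 a b α σ u g ∧
      (∀ v gv : ℝ → ℝ, MemH0 a b α σ v gv →
        (∫ x in Set.Ioo a b, g x * gv x) + (∫ x in Set.Ioo a b, u x * v x)
          = ∫ x in Set.Ioo a b, f x * v x) := by
  have hΓ : 0 < Real.Gamma α := Real.Gamma_pos_of_pos (by linarith [hα.1])
  haveI : CompleteSpace ↥((PhiF a b α σ hab hα hσ).ker) :=
    (ContinuousLinearMap.isClosed_ker _).completeSpace_coe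
  have hcoer : IsCoercive (Bform a b α σ hab hα hσ) := by
    refine ⟨1, one_pos, fun u => ?_⟩
    have h1 : Bform a b α σ hab hα hσ u u =
        ⟪(u : Lp ℝ 2 (volume.restrict (Set.Ioo a b))),
          (u : Lp ℝ 2 (volume.restrict (Set.Ioo a b)))⟫ +
        ⟪TIop a b α σ hab hα hσ (u : Lp ℝ 2 (volume.restrict (Set.Ioo a b))),
          TIop a b α σ hab hα hσ (u : Lp ℝ 2 (volume.restrict (Set.Ioo a b)))⟫ := rfl
    have h2 : (0:ℝ) ≤ ⟪TIop a b α σ hab hα hσ (u : Lp ℝ 2 (volume.restrict (Set.Ioo a b))),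
        TIop a b α σ hab hα hσ (u : Lp ℝ 2 (volume.restrict (Set.Ioo a b)))⟫ :=
      real_inner_self_nonneg
    rw [h1, real_inner_self_eq_norm_mul_norm,
      show ‖(u : Lp ℝ 2 (volume.restrict (Set.Ioo a b)))‖ = ‖u‖ from rfl, one_mul]
    linarith
  set F : ↥((PhiF a b α σ hab hα hσ).ker) →L[ℝ] ℝ :=
    ((innerSL ℝ (hf.toLp f)).comp (TIop a b α σ hab hα hσ)).comp
      (Submodule.subtypeL ((PhiF a b α σ hab hα hσ).ker)) with hF
  set gV : ↥((PhiF a b α σ hab hα hσ).ker) :=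
    hcoer.continuousLinearEquivOfBilin.symm ((InnerProductSpace.toDual ℝ _).symm F) with hgV
  have hkey : ∀ hV : ↥((PhiF a b α σ hab hα hσ).ker),
      Bform a b α σ hab hα hσ gV hV =
        ⟪hf.toLp f, TIop a b α σ hab hα hσ
          (hV : Lp ℝ 2 (volume.restrict (Set.Ioo a b)))⟫ := by
    intro hV
    have h1 := hcoer.continuousLinearEquivOfBilin_apply gV hV
    rw [hgV, ContinuousLinearEquiv.apply_symm_apply, InnerProductSpace.toDual_symm_apply] at h1
    rw [← h1]
    rfl
  set gL : Lp ℝ 2 (volume.restrict (Set.Ioo a b)) :=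
    (gV : Lp ℝ 2 (volume.restrict (Set.Ioo a b))) with hgL
  refine ⟨fun x => tempIL a α σ (⇑gL) x, ⇑gL,
    ⟨memL2_tempIL hα hσ hab (Lp.memLp gL) (Lp.stronglyMeasurable gL), Lp.memLp gL,
      Filter.Eventually.of_forall fun _ => rfl, ?_⟩, ?_⟩
  · have h0 : PhiF a b α σ hab hα hσ gL = 0 := LinearMap.mem_ker.mp gV.2
    rw [PhiF_eq] at h0
    exact (mul_eq_zero.mp h0).resolve_left hΓ.ne'
  · intro v gv hvgv
    obtain ⟨hv, hgv, hveq, hgvb⟩ := hvgv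
    have hgv0 : (⇑(hgv.toLp gv) : ℝ → ℝ) =ᵐ[volume.restrict (Set.Ioo a b)] gv :=
      hgv.coeFn_toLp
    have hker : hgv.toLp gv ∈ (PhiF a b α σ hab hα hσ).ker := by
      rw [LinearMap.mem_ker, ContinuousLinearMap.coe_coe, PhiF_eq, tempIL_congr ⟨hab, le_refl b⟩ hgv0, hgvb, mul_zero]
    have hthis := hkey ⟨hgv.toLp gv, hker⟩
    have hunfold : Bform a b α σ hab hα hσ gV ⟨hgv.toLp gv, hker⟩ =
        ⟪gL, hgv.toLp gv⟫ + ⟪TIop a b α σ hab hα hσ gL,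
          TIop a b α σ hab hα hσ (hgv.toLp gv)⟫ := rfl
    rw [hunfold] at hthis
    have hTveq : (⇑(TIop a b α σ hab hα hσ (hgv.toLp gv)) : ℝ → ℝ)
        =ᵐ[volume.restrict (Set.Ioo a b)] v := by
      filter_upwards [TIop_coe a b α σ hab hα hσ (hgv.toLp gv), hveq,
        ae_restrict_mem measurableSet_Ioo] with x h1 h2 hx
      rw [h1, tempIL_congr ⟨hx.1, hx.2.le⟩ hgv0, ← h2]
    have e1 : ⟪gL, hgv.toLp gv⟫ = ∫ x in Set.Ioo a b, gL x * gv x := by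
      rw [inner_eq]
      exact integral_congr_ae (by filter_upwards [hgv0] with x hx; rw [hx])
    have e2 : ⟪TIop a b α σ hab hα hσ gL, TIop a b α σ hab hα hσ (hgv.toLp gv)⟫ =
        ∫ x in Set.Ioo a b, tempIL a α σ (⇑gL) x * v x := by
      rw [inner_eq]
      refine integral_congr_ae ?_
      filter_upwards [TIop_coe a b α σ hab hα hσ gL, hTveq] with x h1 h2
      rw [h1, h2]
    have e3 : ⟪hf.toLp f, TIop a b α σ hab hα hσ (hgv.toLp gv)⟫ =
        ∫ x in Set.Ioo a b, f x * v x := by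
      rw [inner_eq]
      refine integral_congr_ae ?_
      filter_upwards [hf.coeFn_toLp, hTveq] with x h1 h2
      rw [h1, h2]
    rw [e1, e2, e3] at hthis
    exact hthis

private lemma memH0_sub (hα : α ∈ Set.Ioo (1/2:ℝ) 1) (hσ : 0 < σ) (hab : a < b)
    {u g u' g' : ℝ → ℝ} (h : MemH0 a b α σ u g) (h' : MemH0 a b α σ u' g') :
    MemH0 a b α σ (fun x => u' x - u x) (fun x => g' x - g x) := by
  obtain ⟨hu, hg, he, hb0⟩ := h
  obtain ⟨hu', hg', he', hb0'⟩ := h'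
  refine ⟨hu'.sub hu, hg'.sub hg, ?_, ?_⟩
  · filter_upwards [he, he', ae_restrict_mem measurableSet_Ioo] with x h1 h2 hx
    rw [h2, h1]
    exact (tempIL_sub hx.1.le (integrableOn_ker_mul hα hσ hab hg' ⟨hx.1, hx.2.le⟩)
      (integrableOn_ker_mul hα hσ hab hg ⟨hx.1, hx.2.le⟩)).symm
  · rw [tempIL_sub (le_of_lt hab) (integrableOn_ker_mul hα hσ hab hg' ⟨hab, le_refl b⟩)
      (integrableOn_ker_mul hα hσ hab hg ⟨hab, le_refl b⟩), hb0', hb0, sub_zero]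

/-- The linear tempered fractional boundary value problem
`D_{b-}^{α,σ}(D_{a+}^{α,σ}u) + u = f`, `u(a) = u(b) = 0`, has a unique weak solution
in `H₀^{α,σ}(a,b)` (unique up to a.e. equality). -/
theorem linear_bvp_unique_weak_solution
    (a b α σ : ℝ) (hab : a < b) (hα : α ∈ Set.Ioo (1/2 : ℝ) 1) (hσ : 0 < σ)
    (f : ℝ → ℝ)
    (hf : MeasureTheory.MemLp f 2 (MeasureTheory.volume.restrict (Set.Ioo a b))) :
    ∃ u g : ℝ → ℝ, MemH0 a b α σ u g ∧
      (∀ v gv : ℝ → ℝ, MemH0 a b α σ v gv →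
        (∫ x in Set.Ioo a b, g x * gv x) + (∫ x in Set.Ioo a b, u x * v x)
          = ∫ x in Set.Ioo a b, f x * v x) ∧
      (∀ u' g' : ℝ → ℝ, MemH0 a b α σ u' g' →
        (∀ v gv : ℝ → ℝ, MemH0 a b α σ v gv →
          (∫ x in Set.Ioo a b, g' x * gv x) + (∫ x in Set.Ioo a b, u' x * v x)
            = ∫ x in Set.Ioo a b, f x * v x) →
        (∀ᵐ x ∂(MeasureTheory.volume.restrict (Set.Ioo a b)), u' x = u x) ∧
        (∀ᵐ x ∂(MeasureTheory.volume.restrict (Set.Ioo a b)), g' x = g x)) := by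
  obtain ⟨u, g, hmem, hweak⟩ := exists_sol a b α σ hab hα hσ f hf
  refine ⟨u, g, hmem, hweak, ?_⟩
  intro u' g' hmem' hweak'
  have hsubmem : MemH0 a b α σ (fun x => u' x - u x) (fun x => g' x - g x) :=
    memH0_sub hα hσ hab hmem hmem'
  have h1 := hweak' _ _ hsubmem
  have h2 := hweak _ _ hsubmem
  have hu := hmem.1
  have hg := hmem.2.1
  have hu' := hmem'.1
  have hg' := hmem'.2.1
  have hgsub : MemLp (fun x => g' x - g x) 2 (volume.restrict (Set.Ioo a b)) := hg'.sub hg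
  have husub : MemLp (fun x => u' x - u x) 2 (volume.restrict (Set.Ioo a b)) := hu'.sub hu
  have i1 : Integrable (fun x => g' x * (g' x - g x)) (volume.restrict (Set.Ioo a b)) :=
    integrable_mul_of_memL2 hg' hgsub
  have i2 : Integrable (fun x => g x * (g' x - g x)) (volume.restrict (Set.Ioo a b)) :=
    integrable_mul_of_memL2 hg hgsub
  have i3 : Integrable (fun x => u' x * (u' x - u x)) (volume.restrict (Set.Ioo a b)) :=
    integrable_mul_of_memL2 hu' husub
  have i4 : Integrable (fun x => u x * (u' x - u x)) (volume.restrict (Set.Ioo a b)) :=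
    integrable_mul_of_memL2 hu husub
  have e1 : (∫ x in Set.Ioo a b, (g' x - g x) ^ 2) =
      (∫ x in Set.Ioo a b, g' x * (g' x - g x)) -
        ∫ x in Set.Ioo a b, g x * (g' x - g x) := by
    rw [← integral_sub i1 i2]
    exact integral_congr_ae (Filter.Eventually.of_forall fun x => by ring)
  have e2 : (∫ x in Set.Ioo a b, (u' x - u x) ^ 2) =
      (∫ x in Set.Ioo a b, u' x * (u' x - u x)) -
        ∫ x in Set.Ioo a b, u x * (u' x - u x) := by
    rw [← integral_sub i3 i4]
    exact integral_congr_ae (Filter.Eventually.of_forall fun x => by ring)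
  have hnn1 : 0 ≤ ∫ x in Set.Ioo a b, (g' x - g x) ^ 2 :=
    integral_nonneg fun x => sq_nonneg _
  have hnn2 : 0 ≤ ∫ x in Set.Ioo a b, (u' x - u x) ^ 2 :=
    integral_nonneg fun x => sq_nonneg _
  have hz1 : (∫ x in Set.Ioo a b, (g' x - g x) ^ 2) = 0 := by
    rw [e1]; rw [e2] at hnn2; linarith
  have hz2 : (∫ x in Set.Ioo a b, (u' x - u x) ^ 2) = 0 := by
    rw [e2]; rw [e1] at hnn1; linarith
  constructor
  · have := (integral_eq_zero_iff_of_nonneg_ae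
      (Filter.Eventually.of_forall fun x => sq_nonneg (u' x - u x)) husub.integrable_sq).mp hz2
    filter_upwards [this] with x hx
    have hx' : (u' x - u x) ^ 2 = 0 := hx
    nlinarith [hx']
  · have := (integral_eq_zero_iff_of_nonneg_ae
      (Filter.Eventually.of_forall fun x => sq_nonneg (g' x - g x)) hgsub.integrable_sq).mp hz1
    filter_upwards [this] with x hx
    have hx' : (g' x - g x) ^ 2 = 0 := hx
    nlinarith [hx']
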